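/- Let g : ℝ → ℝ be twice continuously differentiable, C ∈ ℝ, T > 0, let ξ, h₁, h₂ : ℝ² → ℝ be continuous and periodic, let u : [0,T]×ℝ² → ℝ be continuous and periodic in its space variable, and let a₁, a₂ ∈ ℝ. For a continuous periodic h : ℝ² → ℝ, consider the renormalized tangent equation ∂_t v = Δv + g(u)h + v·( g'(u)ξ − C( (g'(u))² + g''(u)g(u) ) ) with initial condition v(0,·) = 0. If v₁, v₂ and v₃ are classical solutions on [0,T]×ℝ², periodic in their space variable, of this equation with h = h₁, h = h₂ and h = a₁h₁ + a₂h₂ respectively, then v₃ = a₁v₁ + a₂v₂ on [0,T]×ℝ². -/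

import Mathlib

open Set

/-- A function of two space variables is periodic (with period `2π` in each
direction, i.e. invariant under translation by `2πk`, `k ∈ ℤ²`). -/
def SpacePeriodic (f : ℝ → ℝ → ℝ) : Prop :=
  ∀ (k₁ k₂ : ℤ) (x y : ℝ), f (x + 2 * Real.pi * k₁) (y + 2 * Real.pi * k₂) = f x y

/-- `v` is a classical, spatially periodic solution on `[0,T] × ℝ²` of the
renormalized tangent equation
`∂ₜ v = Δv + g(u) h + v (g'(u) ξ - C ((g'(u))² + g''(u) g(u)))`
with initial condition `v(0,·) = 0`. -/
def IsTangentSolution (g : ℝ → ℝ) (C T : ℝ) (ξ : ℝ → ℝ → ℝ) (u : ℝ → ℝ → ℝ → ℝ)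
    (h : ℝ → ℝ → ℝ) (v : ℝ → ℝ → ℝ → ℝ) : Prop :=
  (∀ t, SpacePeriodic (v t)) ∧
  ContinuousOn (fun p : ℝ × ℝ × ℝ => v p.1 p.2.1 p.2.2) (Icc 0 T ×ˢ univ) ∧
  (∀ t ∈ Ioc 0 T, ContDiff ℝ 2 (fun p : ℝ × ℝ => v t p.1 p.2)) ∧
  (∀ x y : ℝ, ∀ t ∈ Ioc 0 T, DifferentiableAt ℝ (fun s => v s x y) t) ∧
  (∀ x y : ℝ, ContinuousOn (fun s => deriv (fun s' => v s' x y) s) (Ioc 0 T)) ∧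
  (∀ t ∈ Ioc 0 T, ∀ x y : ℝ,
    deriv (fun s => v s x y) t =
      (deriv (fun a => deriv (fun b => v t b y) a) x
        + deriv (fun b => deriv (fun a => v t x a) b) y)
      + g (u t x y) * h x y
      + v t x y * (deriv g (u t x y) * ξ x y
          - C * ((deriv g (u t x y)) ^ 2 + deriv (deriv g) (u t x y) * g (u t x y)))) ∧
  (∀ x y : ℝ, v 0 x y = 0)

open Filter Topology

/-!
The difference `w = v₃ - (a₁ v₁ + a₂ v₂)` solves the homogeneous equation
`∂ₜ w = Δw + V w` with `w(0, ·) = 0`, where the potential `V` is continuous, hence bounded above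
by some `M` on the compact cell `[0,T] × [0,2π]²`. Maximum principle: by periodicity the weighted
function `e^{-(M+1)t} w` attains its maximum over `[0,T] × ℝ²` at a point of that cell; if the
maximum were positive, it would sit at a time `t₀ > 0`, where `∂ₜ w ≥ (M+1) w` and `Δw ≤ 0`,
contradicting `∂ₜ w = Δw + V w ≤ M w`. Applied to `w` and `-w`, this gives `w = 0`.
-/

noncomputable def laplacian (f : ℝ → ℝ → ℝ) (x y : ℝ) : ℝ :=
  deriv (deriv fun a => f a y) x + deriv (deriv fun b => f x b) y

def periodCell : Set (ℝ × ℝ) := Icc 0 (2 * Real.pi) ×ˢ Icc 0 (2 * Real.pi)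

structure IsLinearHeatSolution (T : ℝ) (V F v : ℝ → ℝ → ℝ → ℝ) : Prop where
  periodic : ∀ t, SpacePeriodic (v t)
  continuousOn : ContinuousOn (fun p : ℝ × ℝ × ℝ => v p.1 p.2.1 p.2.2) (Icc 0 T ×ˢ univ)
  contDiff_space : ∀ t ∈ Ioc 0 T, ContDiff ℝ 2 (fun p : ℝ × ℝ => v t p.1 p.2)
  differentiableAt_time : ∀ x y : ℝ, ∀ t ∈ Ioc 0 T, DifferentiableAt ℝ (fun s => v s x y) t
  deriv_time : ∀ t ∈ Ioc 0 T, ∀ x y : ℝ,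
    deriv (fun s => v s x y) t = laplacian (v t) x y + F t x y + v t x y * V t x y
  initial : ∀ x y : ℝ, v 0 x y = 0

noncomputable def tangentPotential (g : ℝ → ℝ) (C : ℝ) (ξ : ℝ → ℝ → ℝ) (u : ℝ → ℝ → ℝ → ℝ)
    (t x y : ℝ) : ℝ :=
  deriv g (u t x y) * ξ x y - C * (deriv g (u t x y) ^ 2 + deriv (deriv g) (u t x y) * g (u t x y))

section Calculus

variable {φ ψ : ℝ → ℝ}

theorem deriv_linearCombination {x : ℝ} (hφ : DifferentiableAt ℝ φ x)
    (hψ : DifferentiableAt ℝ ψ x) (a b : ℝ) :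
    deriv (fun s => a * φ s + b * ψ s) x = a * deriv φ x + b * deriv ψ x :=
  ((hφ.hasDerivAt.const_mul a).add (hψ.hasDerivAt.const_mul b)).deriv

theorem deriv_deriv_linearCombination (hφ : ContDiff ℝ 2 φ) (hψ : ContDiff ℝ 2 ψ)
    (a b x : ℝ) :
    deriv (deriv fun s => a * φ s + b * ψ s) x =
      a * deriv (deriv φ) x + b * deriv (deriv ψ) x := by
  have hfirst : deriv (fun s => a * φ s + b * ψ s) = fun s => a * deriv φ s + b * deriv ψ s :=
    funext fun s => deriv_linearCombination
      (hφ.differentiable two_ne_zero s) (hψ.differentiable two_ne_zero s) a b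
  rw [hfirst]
  exact deriv_linearCombination
    (hφ.differentiable_deriv_two x) (hψ.differentiable_deriv_two x) a b

theorem IsLocalMax.deriv_deriv_nonpos {x₀ : ℝ} (h : IsLocalMax φ x₀) (hc : ContinuousAt φ x₀) :
    deriv (deriv φ) x₀ ≤ 0 := by
  by_contra! hpos
  have hmin := isLocalMin_of_deriv_deriv_pos hpos h.deriv_eq_zero hc
  have hconst : φ =ᶠ[𝓝 x₀] fun _ => φ x₀ := by
    filter_upwards [h, hmin] with x hmax hmin using le_antisymm hmax hmin
  rw [hconst.deriv.deriv_eq] at hpos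
  simp at hpos

theorem IsMaxOn.nonneg_of_hasDerivAt_right {a b f' : ℝ} (hmax : IsMaxOn φ (Icc a b) b)
    (hab : a < b) (hφ : HasDerivAt φ f' b) : 0 ≤ f' := by
  have hseg : segment ℝ b (b + (a - b)) ⊆ Icc a b := by
    rw [add_sub_cancel, segment_symm]
    exact (segment_eq_Icc hab.le).subset
  have := hmax.localize.hasFDerivWithinAt_nonpos hφ.hasFDerivAt.hasFDerivWithinAt
    (mem_posTangentConeAt_of_segment_subset hseg)
  simp only [ContinuousLinearMap.toSpanSingleton_apply, smul_eq_mul] at this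
  nlinarith

theorem le_deriv_of_isMaxOn_exp_mul {L a b : ℝ} (hab : a < b) (hφ : DifferentiableAt ℝ φ b)
    (hmax : IsMaxOn (fun s => Real.exp (-L * s) * φ s) (Icc a b) b) :
    L * φ b ≤ deriv φ b := by
  have hweight : HasDerivAt (fun s => Real.exp (-L * s)) (Real.exp (-L * b) * -L) b := by
    simpa using ((hasDerivAt_id b).const_mul (-L)).exp
  have := hmax.nonneg_of_hasDerivAt_right hab (hweight.mul hφ.hasDerivAt)
  nlinarith [Real.exp_pos (-L * b)]

end Calculus

theorem laplacian_nonpos_of_forall_le {f : ℝ → ℝ → ℝ}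
    (hf : Continuous fun p : ℝ × ℝ => f p.1 p.2) {x₀ y₀ : ℝ}
    (hmax : ∀ x y, f x y ≤ f x₀ y₀) : laplacian f x₀ y₀ ≤ 0 :=
  add_nonpos
    (IsLocalMax.deriv_deriv_nonpos (Eventually.of_forall fun x => hmax x y₀)
      (hf.comp (continuous_id.prodMk continuous_const)).continuousAt)
    (IsLocalMax.deriv_deriv_nonpos (Eventually.of_forall fun y => hmax x₀ y)
      (hf.comp (continuous_const.prodMk continuous_id)).continuousAt)

theorem laplacian_linearCombination {f₁ f₂ : ℝ → ℝ → ℝ}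
    (hf₁ : ContDiff ℝ 2 fun p : ℝ × ℝ => f₁ p.1 p.2)
    (hf₂ : ContDiff ℝ 2 fun p : ℝ × ℝ => f₂ p.1 p.2) (a b x y : ℝ) :
    laplacian (fun x y => a * f₁ x y + b * f₂ x y) x y =
      a * laplacian f₁ x y + b * laplacian f₂ x y := by
  have hx : ∀ f : ℝ → ℝ → ℝ, (ContDiff ℝ 2 fun p : ℝ × ℝ => f p.1 p.2) →
      ContDiff ℝ 2 fun s => f s y :=
    fun f hf => hf.comp (contDiff_id.prodMk contDiff_const)
  have hy : ∀ f : ℝ → ℝ → ℝ, (ContDiff ℝ 2 fun p : ℝ × ℝ => f p.1 p.2) →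
      ContDiff ℝ 2 fun s => f x s :=
    fun f hf => hf.comp (contDiff_const.prodMk contDiff_id)
  simp only [laplacian]
  rw [deriv_deriv_linearCombination (hx f₁ hf₁) (hx f₂ hf₂),
    deriv_deriv_linearCombination (hy f₁ hf₁) (hy f₂ hf₂)]
  ring

theorem isCompact_periodCell : IsCompact periodCell :=
  isCompact_Icc.prod isCompact_Icc

theorem SpacePeriodic.exists_mem_periodCell_eq {f : ℝ → ℝ → ℝ} (hf : SpacePeriodic f)
    (x y : ℝ) : ∃ p ∈ periodCell, f p.1 p.2 = f x y := by
  have hπ : 0 < 2 * Real.pi := by positivity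
  obtain ⟨k₁, hk₁, -⟩ := existsUnique_sub_zsmul_mem_Ico hπ x 0
  obtain ⟨k₂, hk₂, -⟩ := existsUnique_sub_zsmul_mem_Ico hπ y 0
  refine ⟨(x - k₁ • (2 * Real.pi), y - k₂ • (2 * Real.pi)),
    ⟨Ico_subset_Icc_self (by simpa using hk₁), Ico_subset_Icc_self (by simpa using hk₂)⟩, ?_⟩
  have := hf k₁ k₂ (x - k₁ • (2 * Real.pi)) (y - k₂ • (2 * Real.pi))
  simp only [zsmul_eq_mul] at this ⊢
  rw [← this]
  ring_nf

theorem exists_forall_le_of_spacePeriodic {W : ℝ → ℝ → ℝ → ℝ} {T : ℝ} (hT : 0 ≤ T)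
    (hW : ∀ t, SpacePeriodic (W t))
    (hc : ContinuousOn (fun p : ℝ × ℝ × ℝ => W p.1 p.2.1 p.2.2) (Icc 0 T ×ˢ univ)) :
    ∃ t₀ ∈ Icc 0 T, ∃ p₀ ∈ periodCell, ∀ t ∈ Icc 0 T, ∀ x y, W t x y ≤ W t₀ p₀.1 p₀.2 := by
  have hne : (Icc 0 T ×ˢ periodCell).Nonempty :=
    ⟨(0, 0, 0), ⟨le_rfl, hT⟩, ⟨le_rfl, by positivity⟩, ⟨le_rfl, by positivity⟩⟩
  obtain ⟨⟨t₀, p₀⟩, ⟨ht₀, hp₀⟩, hmax⟩ := (isCompact_Icc.prod isCompact_periodCell).exists_isMaxOn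
    hne (hc.mono (prod_mono le_rfl (subset_univ _)))
  refine ⟨t₀, ht₀, p₀, hp₀, fun t ht x y => ?_⟩
  obtain ⟨p, hp, hpx⟩ := (hW t).exists_mem_periodCell_eq x y
  exact hpx ▸ hmax (a := (t, p)) ⟨ht, hp⟩

theorem ContinuousOn.exists_forall_le_periodCell {W : ℝ → ℝ → ℝ → ℝ} {T : ℝ}
    (hc : ContinuousOn (fun p : ℝ × ℝ × ℝ => W p.1 p.2.1 p.2.2) (Icc 0 T ×ˢ univ)) :
    ∃ M, ∀ t ∈ Icc 0 T, ∀ p ∈ periodCell, W t p.1 p.2 ≤ M := by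
  obtain ⟨M, hM⟩ := (isCompact_Icc.prod isCompact_periodCell).bddAbove_image
    (hc.mono (prod_mono le_rfl (subset_univ _)))
  exact ⟨M, fun t ht p hp => hM ⟨(t, p), ⟨ht, hp⟩, rfl⟩⟩

namespace IsLinearHeatSolution

variable {T : ℝ} {V F F₁ F₂ v v₁ v₂ : ℝ → ℝ → ℝ → ℝ}

theorem linearCombination (h₁ : IsLinearHeatSolution T V F₁ v₁)
    (h₂ : IsLinearHeatSolution T V F₂ v₂) (a b : ℝ) :
    IsLinearHeatSolution T V (fun t x y => a * F₁ t x y + b * F₂ t x y)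
      (fun t x y => a * v₁ t x y + b * v₂ t x y) where
  periodic t k₁ k₂ x y := by simp only [h₁.periodic t k₁ k₂ x y, h₂.periodic t k₁ k₂ x y]
  continuousOn :=
    (continuousOn_const.mul h₁.continuousOn).add (continuousOn_const.mul h₂.continuousOn)
  contDiff_space t ht :=
    (contDiff_const.mul (h₁.contDiff_space t ht)).add (contDiff_const.mul (h₂.contDiff_space t ht))
  differentiableAt_time x y t ht :=
    ((h₁.differentiableAt_time x y t ht).const_mul a).add
      ((h₂.differentiableAt_time x y t ht).const_mul b)
  deriv_time t ht x y := by
    rw [deriv_linearCombination (h₁.differentiableAt_time x y t ht)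
        (h₂.differentiableAt_time x y t ht),
      laplacian_linearCombination (h₁.contDiff_space t ht) (h₂.contDiff_space t ht),
      h₁.deriv_time t ht x y, h₂.deriv_time t ht x y]
    ring
  initial x y := by simp only [h₁.initial, h₂.initial, mul_zero, add_zero]

theorem nonpos_of_forcing_nonpos {w : ℝ → ℝ → ℝ → ℝ} {M : ℝ}
    (hw : IsLinearHeatSolution T V F w)
    (hV : ∀ t ∈ Icc 0 T, ∀ p ∈ periodCell, V t p.1 p.2 ≤ M)
    (hF : ∀ t ∈ Ioc 0 T, ∀ x y, F t x y ≤ 0) :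
    ∀ t ∈ Icc 0 T, ∀ x y, w t x y ≤ 0 := by
  intro t ht x y
  set L := M + 1
  obtain ⟨t₀, ht₀, ⟨x₀, y₀⟩, hp₀, hmax⟩ :=
    exists_forall_le_of_spacePeriodic (W := fun t x y => Real.exp (-L * t) * w t x y)
      (ht.1.trans ht.2) (fun t k₁ k₂ x y => by simp only [hw.periodic t k₁ k₂ x y])
      ((Real.continuous_exp.comp (continuous_const.mul continuous_fst)).continuousOn.mul
        hw.continuousOn)
  suffices hZ : Real.exp (-L * t₀) * w t₀ x₀ y₀ ≤ 0 by
    nlinarith [hmax t ht x y, Real.exp_pos (-L * t)]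
  by_contra! hpos
  have hw₀ : 0 < w t₀ x₀ y₀ := pos_of_mul_pos_right hpos (Real.exp_pos _).le
  have ht₀' : t₀ ∈ Ioc 0 T := by
    refine ⟨ht₀.1.lt_of_ne ?_, ht₀.2⟩
    rintro rfl
    simp [hw.initial] at hw₀
  have htime : L * w t₀ x₀ y₀ ≤ deriv (fun s => w s x₀ y₀) t₀ :=
    le_deriv_of_isMaxOn_exp_mul ht₀'.1 (hw.differentiableAt_time x₀ y₀ t₀ ht₀')
      fun s hs => hmax s ⟨hs.1, hs.2.trans ht₀.2⟩ x₀ y₀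
  have hspace : laplacian (w t₀) x₀ y₀ ≤ 0 :=
    laplacian_nonpos_of_forall_le (hw.contDiff_space t₀ ht₀').continuous fun x y =>
      le_of_mul_le_mul_left (hmax t₀ ht₀ x y) (Real.exp_pos _)
  nlinarith [hw.deriv_time t₀ ht₀' x₀ y₀, hF t₀ ht₀' x₀ y₀,
    mul_le_mul_of_nonneg_left (hV t₀ ht₀ _ hp₀) hw₀.le]

theorem unique {v' : ℝ → ℝ → ℝ → ℝ} {M : ℝ} (hv : IsLinearHeatSolution T V F v)
    (hv' : IsLinearHeatSolution T V F v')
    (hV : ∀ t ∈ Icc 0 T, ∀ p ∈ periodCell, V t p.1 p.2 ≤ M) :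
    ∀ t ∈ Icc 0 T, ∀ x y, v t x y = v' t x y := by
  intro t ht x y
  have hle := (hv.linearCombination hv' 1 (-1)).nonpos_of_forcing_nonpos hV
    (fun _ _ _ _ => by linarith) t ht x y
  have hge := (hv.linearCombination hv' (-1) 1).nonpos_of_forcing_nonpos hV
    (fun _ _ _ _ => by linarith) t ht x y
  linarith

end IsLinearHeatSolution

theorem IsTangentSolution.isLinearHeatSolution {g : ℝ → ℝ} {C T : ℝ} {ξ h : ℝ → ℝ → ℝ}
    {u v : ℝ → ℝ → ℝ → ℝ} (hv : IsTangentSolution g C T ξ u h v) :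
    IsLinearHeatSolution T (tangentPotential g C ξ u) (fun t x y => g (u t x y) * h x y) v :=
  let ⟨hp, hc, hs, ht, _, heq, h0⟩ := hv
  ⟨hp, hc, hs, ht, heq, h0⟩

theorem continuousOn_tangentPotential {g : ℝ → ℝ} {C T : ℝ} {ξ : ℝ → ℝ → ℝ}
    {u : ℝ → ℝ → ℝ → ℝ} (hg : ContDiff ℝ 2 g) (hξ : Continuous fun p : ℝ × ℝ => ξ p.1 p.2)
    (hu : ContinuousOn (fun p : ℝ × ℝ × ℝ => u p.1 p.2.1 p.2.2) (Icc 0 T ×ˢ univ)) :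
    ContinuousOn (fun p : ℝ × ℝ × ℝ => tangentPotential g C ξ u p.1 p.2.1 p.2.2)
      (Icc 0 T ×ˢ univ) := by
  have hg' : Continuous (deriv g) := hg.continuous_deriv (by norm_num)
  have hg'' : Continuous (deriv (deriv g)) := (hg.deriv' (n := 1)).continuous_deriv_one
  have hξ' : Continuous fun p : ℝ × ℝ × ℝ => ξ p.2.1 p.2.2 := hξ.comp continuous_snd
  exact ((hg'.comp_continuousOn hu).mul hξ'.continuousOn).sub
    (continuousOn_const.mul (((hg'.comp_continuousOn hu).pow 2).add
      ((hg''.comp_continuousOn hu).mul (hg.continuous.comp_continuousOn hu))))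

theorem stmt_12_general
    (g : ℝ → ℝ) (hg : ContDiff ℝ 2 g)
    (C T : ℝ)
    (ξ h₁ h₂ : ℝ → ℝ → ℝ)
    (hξc : Continuous fun p : ℝ × ℝ => ξ p.1 p.2)
    (u : ℝ → ℝ → ℝ → ℝ)
    (huc : ContinuousOn (fun p : ℝ × ℝ × ℝ => u p.1 p.2.1 p.2.2) (Icc 0 T ×ˢ univ))
    (a₁ a₂ : ℝ)
    (v₁ v₂ v₃ : ℝ → ℝ → ℝ → ℝ)
    (hv₁ : IsTangentSolution g C T ξ u h₁ v₁)
    (hv₂ : IsTangentSolution g C T ξ u h₂ v₂)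
    (hv₃ : IsTangentSolution g C T ξ u
      (fun x y => a₁ * h₁ x y + a₂ * h₂ x y) v₃) :
    ∀ t ∈ Icc 0 T, ∀ x y : ℝ, v₃ t x y = a₁ * v₁ t x y + a₂ * v₂ t x y := by
  obtain ⟨M, hM⟩ := (continuousOn_tangentPotential (C := C) hg hξc huc).exists_forall_le_periodCell
  have hcomb := hv₁.isLinearHeatSolution.linearCombination hv₂.isLinearHeatSolution a₁ a₂
  have hforcing : (fun t x y => a₁ * (g (u t x y) * h₁ x y) + a₂ * (g (u t x y) * h₂ x y)) =
      fun t x y => g (u t x y) * (a₁ * h₁ x y + a₂ * h₂ x y) := by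
    funext t x y
    ring
  rw [hforcing] at hcomb
  exact hv₃.isLinearHeatSolution.unique hcomb hM

/-- the solution of the renormalized tangent equation depends
linearly on the inhomogeneity `h`. -/
theorem stmt_12
    (g : ℝ → ℝ) (hg : ContDiff ℝ 2 g)
    (C T : ℝ) (hT : 0 < T)
    (ξ h₁ h₂ : ℝ → ℝ → ℝ)
    (hξc : Continuous fun p : ℝ × ℝ => ξ p.1 p.2) (hξp : SpacePeriodic ξ)
    (hh₁c : Continuous fun p : ℝ × ℝ => h₁ p.1 p.2) (hh₁p : SpacePeriodic h₁)
    (hh₂c : Continuous fun p : ℝ × ℝ => h₂ p.1 p.2) (hh₂p : SpacePeriodic h₂)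
    (u : ℝ → ℝ → ℝ → ℝ)
    (hup : ∀ t, SpacePeriodic (u t))
    (huc : ContinuousOn (fun p : ℝ × ℝ × ℝ => u p.1 p.2.1 p.2.2) (Icc 0 T ×ˢ univ))
    (a₁ a₂ : ℝ)
    (v₁ v₂ v₃ : ℝ → ℝ → ℝ → ℝ)
    (hv₁ : IsTangentSolution g C T ξ u h₁ v₁)
    (hv₂ : IsTangentSolution g C T ξ u h₂ v₂)
    (hv₃ : IsTangentSolution g C T ξ u
      (fun x y => a₁ * h₁ x y + a₂ * h₂ x y) v₃) :
    ∀ t ∈ Icc 0 T, ∀ x y : ℝ, v₃ t x y = a₁ * v₁ t x y + a₂ * v₂ t x y :=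
  stmt_12_general g hg C T ξ h₁ h₂ hξc u huc a₁ a₂ v₁ v₂ v₃ hv₁ hv₂ hv₃
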